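/- Suppose q ≡ −1 (mod 3). Let W be the hwise-fixed-5-space, let U be an H_I-5-space, and set Σ₃ = W ∩ U (a 4-dimensional F-subspace). Then the fixed lines contained in Σ₃, i.e. the 2-dimensional F-subspaces L ⊆ Σ₃ with σ(L) = L, are exactly q²+1 in number, pairwise intersect in {0}, and every nonzero vector of Σ₃ lies in one of them; that is, they form a line spread of the projective 3-space ℙ(Σ₃). -/
import Mathlib


open Module

set_option linter.unusedSectionVars false
set_option maxHeartbeats 1000000
noncomputable section

/-- The ambient 9-dimensional space `V = K³` (an `F`-space when `K` is an `F`-algebra). -/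
abbrev VK (K : Type*) := K × K × K

/-- The semilinear map `σ(x,y,z) = (z^q, x^q, y^q)` of `V = K³`. -/
def sig (q : ℕ) {K : Type*} [Field K] (v : VK K) : VK K :=
  (v.2.2 ^ q, v.1 ^ q, v.2.1 ^ q)

section Aux

variable {q : ℕ} {F K : Type*} [Field F] [Fintype F] [Field K] [Fintype K] [Algebra F K]

lemma frob_add (hF : Fintype.card F = q) (x y : K) : (x + y) ^ q = x ^ q + y ^ q := by
  haveI : CharP F (ringChar F) := ringChar.charP F
  obtain ⟨n, hp, hcard⟩ := FiniteField.card F (ringChar F)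
  haveI : Fact (ringChar F).Prime := ⟨hp⟩
  haveI : CharP K (ringChar F) :=
    charP_of_injective_algebraMap (algebraMap F K).injective (ringChar F)
  rw [hF] at hcard
  rw [hcard]
  exact add_pow_char_pow x y _ _

lemma pow_card_self (hF : Fintype.card F = q) (c : F) : c ^ q = c := by
  rw [← hF]; exact FiniteField.pow_card c

lemma smul_pow_q (hF : Fintype.card F = q) (c : F) (x : K) : (c • x) ^ q = c • x ^ q := by
  rw [Algebra.smul_def, mul_pow, ← map_pow, pow_card_self hF, Algebra.smul_def]

lemma pow_q3_self (hK : Fintype.card K = q ^ 3) (x : K) : ((x ^ q) ^ q) ^ q = x := by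
  rw [← pow_mul, ← pow_mul, show q * (q * q) = q ^ 3 by ring, ← hK]
  exact FiniteField.pow_card x

/-- `sig` as an `F`-linear map. -/
def sigL (q : ℕ) (F : Type*) (K : Type*) [Field F] [Fintype F] [Field K] [Fintype K]
    [Algebra F K] (hF : Fintype.card F = q) : VK K →ₗ[F] VK K where
  toFun := sig q
  map_add' v w := by
    simp only [sig, Prod.fst_add, Prod.snd_add, frob_add hF, Prod.mk_add_mk]
  map_smul' c v := by
    simp only [sig, Prod.smul_fst, Prod.smul_snd, smul_pow_q hF, Prod.smul_mk, RingHom.id_apply]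

@[simp] lemma sigL_apply (hF : Fintype.card F = q) (v : VK K) : sigL q F K hF v = sig q v := rfl

lemma sig_sig_sig (hK : Fintype.card K = q ^ 3) (v : VK K) :
    sig q (sig q (sig q v)) = v := by
  simp only [sig, pow_q3_self hK]

lemma sig_Ksmul (lam : K) (v : VK K) : sig q (lam • v) = (lam ^ q) • sig q v := by
  simp only [sig, Prod.smul_fst, Prod.smul_snd, smul_eq_mul, Prod.smul_mk, mul_pow]


lemma three_ne_zero'' (hF : Fintype.card F = q) (hq3 : q % 3 = 2) : (3 : F) ≠ 0 := by
  intro h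
  haveI : CharP F (ringChar F) := ringChar.charP F
  obtain ⟨n, hp, hcard⟩ := FiniteField.card F (ringChar F)
  have hdvd : ringChar F ∣ 3 := (CharP.cast_eq_zero_iff F (ringChar F) 3).mp (by exact_mod_cast h)
  have h3 : ringChar F = 3 := (Nat.prime_dvd_prime_iff_eq hp Nat.prime_three).mp hdvd
  rw [hF, h3] at hcard
  have : (3 : ℕ) ∣ q := hcard ▸ dvd_pow_self 3 n.2.ne'
  omega

lemma cube_root_one (hF : Fintype.card F = q) (hq : 2 < q) (hq3 : q % 3 = 2)
    (a : F) (ha : a ^ 3 = 1) : a = 1 := by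
  have ha0 : a ≠ 0 := by
    intro h; rw [h] at ha; simp at ha
  have h1 : a ^ (q - 1) = 1 := by
    rw [← hF]; exact FiniteField.pow_card_sub_one_eq_one a ha0
  obtain ⟨m, hm⟩ : ∃ m, q - 1 = 3 * m + 1 := ⟨(q - 1) / 3, by omega⟩
  rw [hm, pow_add, pow_mul, ha, one_pow, one_mul, pow_one] at h1
  exact h1

lemma quad_no_root (hF : Fintype.card F = q) (hq : 2 < q) (hq3 : q % 3 = 2)
    (a : F) : 1 + a + a ^ 2 ≠ 0 := by
  intro h
  have hcube : a ^ 3 = 1 := by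
    have : a ^ 3 - 1 = (a - 1) * (1 + a + a ^ 2) := by ring
    rw [h, mul_zero, sub_eq_zero] at this; exact this
  have := cube_root_one hF hq hq3 a hcube
  rw [this] at h
  norm_num at h
  exact three_ne_zero'' hF hq3 (by linear_combination h)

lemma exists_pow_ne (hq : 2 < q) (hK : Fintype.card K = q ^ 3) {m n : ℕ}
    (hm : 0 < m) (hmn : m < n) (hn : n < q ^ 3) : ∃ x : K, x ^ m ≠ x ^ n := by
  by_contra hcon
  push_neg at hcon
  set P : Polynomial K := Polynomial.X ^ n - Polynomial.X ^ m with hP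
  have hdeg : P.natDegree = n := by
    rw [hP, Polynomial.natDegree_sub_eq_left_of_natDegree_lt] <;>
      simp [Polynomial.natDegree_X_pow, hmn]
  have hroots : (Finset.univ : Finset K).val ⊆ P.roots := by
    intro x hx
    rw [Polynomial.mem_roots']
    refine ⟨fun h0 => by rw [h0, Polynomial.natDegree_zero] at hdeg; omega, ?_⟩
    simp [hP, Polynomial.IsRoot, hcon x]
  have := Polynomial.card_le_degree_of_subset_roots hroots
  rw [hdeg, Finset.card_univ, hK] at this
  omega

lemma char_indep (hq : 2 < q) (hK : Fintype.card K = q ^ 3) (a b c : K)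
    (h : ∀ x : K, a * x + b * x ^ q + c * x ^ (q * q) = 0) : a = 0 ∧ b = 0 ∧ c = 0 := by
  have hq3 : q < q ^ 3 := by nlinarith [sq_nonneg q]
  have hqq3 : q * q < q ^ 3 := by nlinarith [sq_nonneg q]
  have h1q : 1 < q := by omega
  have hqqq : q < q * q := by nlinarith [sq_nonneg q]
  set g : Fin 3 → (K →* K) := ![powMonoidHom 1, powMonoidHom q, powMonoidHom (q * q)] with hg
  have hne : ∀ m n : ℕ, 0 < m → m < n → n < q ^ 3 →
      (powMonoidHom m : K →* K) ≠ powMonoidHom n := by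
    intro m n h1 h2 h3 heq
    obtain ⟨x, hx⟩ := exists_pow_ne hq hK h1 h2 h3
    exact hx (DFunLike.congr_fun heq x)
  have h01 : (powMonoidHom 1 : K →* K) ≠ powMonoidHom q := hne 1 q one_pos h1q hq3
  have h02 : (powMonoidHom 1 : K →* K) ≠ powMonoidHom (q*q) := hne 1 (q*q) one_pos (by omega) hqq3
  have h12 : (powMonoidHom q : K →* K) ≠ powMonoidHom (q*q) := hne q (q*q) (by omega) hqqq hqq3
  have hginj : Function.Injective g := by
    intro i j hij
    fin_cases i <;> fin_cases j <;> simp only [hg, Matrix.cons_val_zero, Matrix.cons_val_one,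
      Matrix.head_cons, Matrix.cons_val_two, Matrix.tail_cons] at hij <;>
      first
        | rfl
        | exact absurd hij h01
        | exact absurd hij h02
        | exact absurd hij h12
        | exact absurd hij.symm h01
        | exact absurd hij.symm h02
        | exact absurd hij.symm h12
  have li : LinearIndependent K (fun i => ⇑(g i) : Fin 3 → K → K) :=
    (linearIndependent_monoidHom K K).comp g hginj
  have hz := Fintype.linearIndependent_iff.mp li ![a, b, c] ?_
  · exact ⟨hz 0, hz 1, hz 2⟩
  · funext x
    simp only [Fin.sum_univ_three, hg]
    simp [powMonoidHom, Pi.smul_apply, smul_eq_mul]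
    linear_combination h x

/-- The map `x ↦ (x, x^q, x^{q·q})` as an `F`-linear embedding of `K`. -/
def phiL (q : ℕ) (F : Type*) (K : Type*) [Field F] [Fintype F] [Field K] [Fintype K]
    [Algebra F K] (hF : Fintype.card F = q) : K →ₗ[F] VK K where
  toFun x := (x, x ^ q, (x ^ q) ^ q)
  map_add' x y := by simp only [frob_add hF, Prod.mk_add_mk]
  map_smul' c x := by
    simp only [smul_pow_q hF, RingHom.id_apply, Prod.smul_mk]

end Aux

/-- The S-plane through `v`, i.e. the 3-dimensional `F`-subspace `K·v`. -/
def Splane (F : Type*) [Field F] {K : Type*} [Field K] [Algebra F K]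
    (v : VK K) : Submodule F (VK K) :=
  Submodule.restrictScalars F (Submodule.span K {v})

/-- `[v]` is a fixed point: `σ(v) ∈ F·v`. -/
def IsFixedPt (F : Type*) [Field F] {K : Type*} [Field K] [Algebra F K]
    (q : ℕ) (v : VK K) : Prop :=
  sig q v ∈ Submodule.span F {v}

/-- `[v]` has collinear orbit: the `F`-span of `{v, σv, σ²v}` is 2-dimensional. -/
def Collin (F : Type*) [Field F] {K : Type*} [Field K] [Algebra F K]
    (q : ℕ) (v : VK K) : Prop :=
  finrank F (Submodule.span F {v, sig q v, sig q (sig q v)}) = 2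

/-- `[v]` has triangle orbit: `v, σv, σ²v` are `F`-linearly independent. -/
def Triangle (F : Type*) [Field F] {K : Type*} [Field K] [Algebra F K]
    (q : ℕ) (v : VK K) : Prop :=
  LinearIndependent F ![v, sig q v, sig q (sig q v)]

/-- The S-plane `K·v` has Type I: `σ(v) ∈ K·v`. -/
def TypeI {K : Type*} [Field K] (q : ℕ) (v : VK K) : Prop :=
  sig q v ∈ Submodule.span K {v}

/-- The S-plane `K·v` has Type II: `v, σv, σ²v` `K`-dependent but `σ(v) ∉ K·v`. -/
def TypeII {K : Type*} [Field K] (q : ℕ) (v : VK K) : Prop :=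
  ¬ LinearIndependent K ![v, sig q v, sig q (sig q v)] ∧
    sig q v ∉ Submodule.span K {v}

/-- The S-plane `K·v` has Type III: `v, σv, σ²v` are `K`-linearly independent. -/
def TypeIII {K : Type*} [Field K] (q : ℕ) (v : VK K) : Prop :=
  LinearIndependent K ![v, sig q v, sig q (sig q v)]

/-- `σ` acts on the subspace `W` as multiplication by a scalar of `F`. -/
def ScalarOn {F : Type*} [Field F] {K : Type*} [Field K] [Algebra F K]
    (q : ℕ) (W : Submodule F (VK K)) : Prop :=
  ∃ c : F, ∀ v ∈ W, sig q v = c • v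

/-- A pointwise-fixed plane: 3-dimensional `F`-subspace on which `σ` acts as a scalar. -/
def PtwisePlane {F : Type*} [Field F] {K : Type*} [Field K] [Algebra F K]
    (q : ℕ) (W : Submodule F (VK K)) : Prop :=
  finrank F W = 3 ∧ ScalarOn q W

/-- A fixed line: 2-dimensional `F`-subspace `L` with `σ(L) = L`. -/
def FixedLine {F : Type*} [Field F] {K : Type*} [Field K] [Algebra F K]
    (q : ℕ) (L : Submodule F (VK K)) : Prop :=
  finrank F L = 2 ∧ sig q '' (L : Set (VK K)) = (L : Set (VK K))

/-- A pointwise-fixed line: fixed line on which `σ` acts as a scalar. -/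
def PtwiseLine {F : Type*} [Field F] {K : Type*} [Field K] [Algebra F K]
    (q : ℕ) (L : Submodule F (VK K)) : Prop :=
  FixedLine q L ∧ ScalarOn q L

/-- A fixed-I-line: fixed line, not scalar, contained in some `K·v`. -/
def FixedILine {F : Type*} [Field F] {K : Type*} [Field K] [Algebra F K]
    (q : ℕ) (L : Submodule F (VK K)) : Prop :=
  FixedLine q L ∧ ¬ ScalarOn q L ∧ ∃ v : VK K, v ≠ 0 ∧ L ≤ Splane F v

/-- A fixed-II-line: fixed line, not scalar, contained in no `K·v`. -/
def FixedIILine {F : Type*} [Field F] {K : Type*} [Field K] [Algebra F K]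
    (q : ℕ) (L : Submodule F (VK K)) : Prop :=
  FixedLine q L ∧ ¬ ScalarOn q L ∧ ¬ ∃ v : VK K, v ≠ 0 ∧ L ≤ Splane F v

/-- A hwise-fixed-5-space: 6-dimensional `F`-subspace `W` with `σ(W) = W` such that the
map induced by `σ` on `V/W` is multiplication by a scalar. -/
def HFix5 {F : Type*} [Field F] {K : Type*} [Field K] [Algebra F K]
    (q : ℕ) (W : Submodule F (VK K)) : Prop :=
  finrank F W = 6 ∧ sig q '' (W : Set (VK K)) = (W : Set (VK K)) ∧
    ∃ c : F, ∀ v : VK K, sig q v - c • v ∈ W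

/-- An `H_I`-5-space: a 2-dimensional `K`-subspace `U` of `V` with `σ(U) = U`. -/
def HI5 {K : Type*} [Field K] (q : ℕ) (U : Submodule K (VK K)) : Prop :=
  finrank K U = 2 ∧ sig q '' (U : Set (VK K)) = (U : Set (VK K))

/-- for q ≡ −1 (mod 3), the fixed lines in the intersection of the
hwise-fixed-5-space with an H_I-5-space form a line spread of that 3-space. -/
theorem stmt14 (q : ℕ) (hq : 2 < q)
    (F : Type*) [Field F] [Fintype F] (K : Type*) [Field K] [Fintype K]
    [Algebra F K] (hF : Fintype.card F = q) (hK : Fintype.card K = q ^ 3)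
    (hq3 : q % 3 = 2)
    (W : Submodule F (VK K)) (hW : HFix5 q W)
    (U : Submodule K (VK K)) (hU : HI5 q U) :
    finrank F ↥(W ⊓ Submodule.restrictScalars F U) = 4 ∧
    Nat.card {L : Submodule F (VK K) //
        FixedLine q L ∧ L ≤ W ⊓ Submodule.restrictScalars F U} = q ^ 2 + 1 ∧
    (∀ L M : Submodule F (VK K),
      FixedLine q L → L ≤ W ⊓ Submodule.restrictScalars F U →
      FixedLine q M → M ≤ W ⊓ Submodule.restrictScalars F U →
      L ≠ M → L ⊓ M = ⊥) ∧
    (∀ w ∈ W ⊓ Submodule.restrictScalars F U, w ≠ 0 →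
      ∃ L : Submodule F (VK K), FixedLine q L ∧
        L ≤ W ⊓ Submodule.restrictScalars F U ∧ w ∈ L) := by
  classical
  have hq1 : 1 < q := by omega
  have hFK : finrank F K = 3 := by
    have h := card_eq_pow_finrank (K := F) (V := K)
    rw [hF, hK] at h
    exact (Nat.pow_right_injective (by omega) h.symm)
  have hV9 : finrank F (VK K) = 9 := by
    show finrank F (K × K × K) = 9
    rw [Module.finrank_prod, Module.finrank_prod, hFK]
  set σ := sigL q F K hF with hσdef
  set N : VK K →ₗ[F] VK K := LinearMap.id + σ + σ ∘ₗ σ with hNdef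
  have hNapp : ∀ v : VK K, N v = v + sig q v + sig q (sig q v) := fun v => rfl
  set φ := phiL q F K hF with hφdef
  have hφinj : Function.Injective φ := fun x y hxy => congrArg Prod.fst hxy
  have hsigφ : ∀ x : K, sig q (φ x) = φ x := by
    intro x
    show ((((x : K) ^ q) ^ q) ^ q, x ^ q, (x ^ q) ^ q) = (x, x ^ q, (x ^ q) ^ q)
    rw [pow_q3_self hK]
  have h3 : (3 : F) ≠ 0 := three_ne_zero'' hF hq3
  have hrange : LinearMap.range N = LinearMap.range φ := by
    apply le_antisymm
    · rintro _ ⟨v, rfl⟩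
      have hfix : sig q (N v) = N v := by
        have h1 : sig q (N v) = sig q v + sig q (sig q v) + sig q (sig q (sig q v)) := by
          rw [hNapp]
          show σ (v + sig q v + sig q (sig q v)) = _
          rw [map_add, map_add]; rfl
        rw [h1, sig_sig_sig hK, hNapp]; abel
      refine ⟨(N v).1, ?_⟩
      have h2 : (N v).1 ^ q = (N v).2.1 := congrArg (fun u : VK K => u.2.1) hfix
      have h3' : (N v).2.1 ^ q = (N v).2.2 := congrArg (fun u : VK K => u.2.2) hfix
      show ((N v).1, (N v).1 ^ q, ((N v).1 ^ q) ^ q) = N v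
      rw [h2, h3']
    · rintro _ ⟨x, rfl⟩
      refine ⟨(3 : F)⁻¹ • φ x, ?_⟩
      have hNφ : N (φ x) = (3 : F) • φ x := by
        rw [hNapp, hsigφ, hsigφ, show (3 : F) = 1 + 1 + 1 by norm_num, add_smul, add_smul,
          one_smul]
      rw [map_smul, hNφ, inv_smul_smul₀ h3]
  have hker6 : finrank F (LinearMap.ker N) = 6 := by
    have hrn := LinearMap.finrank_range_add_finrank_ker N
    rw [hrange, LinearMap.finrank_range_of_inj hφinj, hFK, hV9] at hrn
    omega
  obtain ⟨hW6, hWim, c, hc⟩ := hW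
  have hcube : ∀ v : VK K, (1 - c ^ 3) • v ∈ W := by
    intro v
    have hA := hc v
    have hB := hc (sig q v)
    have hC := hc (sig q (sig q v))
    rw [sig_sig_sig hK] at hC
    have hiden : (1 - c ^ 3) • v = (v - c • sig q (sig q v)) + c • (sig q (sig q v) - c • sig q v)
        + c ^ 2 • (sig q v - c • v) := by module
    rw [hiden]
    exact W.add_mem (W.add_mem hC (W.smul_mem c hB)) (W.smul_mem _ hA)
  have hc3 : c ^ 3 = 1 := by
    by_contra hne
    have h0 : (1 - c ^ 3) ≠ 0 := sub_ne_zero.mpr fun h => hne h.symm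
    have hWtop : W = ⊤ := by
      rw [Submodule.eq_top_iff']
      intro v
      have hm := W.smul_mem (1 - c ^ 3)⁻¹ (hcube v)
      rwa [inv_smul_smul₀ h0] at hm
    rw [hWtop, finrank_top, hV9] at hW6
    omega
  have hc1 : c = 1 := cube_root_one hF hq hq3 c hc3
  rw [hc1] at hc
  simp only [one_smul] at hc
  have hkerW : LinearMap.ker N ≤ W := by
    intro v hv
    have hNv : v + sig q v + sig q (sig q v) = 0 := by
      have h := LinearMap.mem_ker.mp hv; rwa [hNapp] at h
    have ha := hc v
    have hb := hc (sig q v)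
    have h3v : (3 : F) • v = (v + sig q v + sig q (sig q v)) - (sig q v - v)
        - ((sig q (sig q v) - sig q v) + (sig q v - v)) := by
      rw [show (3 : F) = 1 + 1 + 1 by norm_num]; module
    rw [hNv] at h3v
    have hmem : (3 : F) • v ∈ W := by
      rw [h3v]
      exact W.sub_mem (W.sub_mem W.zero_mem ha) (W.add_mem hb ha)
    have hm := W.smul_mem (3 : F)⁻¹ hmem
    rwa [inv_smul_smul₀ h3] at hm
  have hWker : W = LinearMap.ker N :=
    (Submodule.eq_of_le_of_finrank_eq hkerW (by rw [hker6, hW6])).symm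
  set S3 := W ⊓ Submodule.restrictScalars F U with hS3def
  have hUmem : ∀ v ∈ U, sig q v ∈ U := by
    intro v hv
    have : sig q v ∈ sig q '' (U : Set (VK K)) := Set.mem_image_of_mem _ hv
    rwa [hU.2] at this
  have hWmem : ∀ v ∈ W, sig q v ∈ W := by
    intro v hv
    have : sig q v ∈ sig q '' (W : Set (VK K)) := Set.mem_image_of_mem _ hv
    rwa [hWim] at this
  have hS3mem : ∀ v ∈ S3, sig q v ∈ S3 := by
    intro v hv
    rw [hS3def, Submodule.mem_inf] at hv ⊢
    exact ⟨hWmem v hv.1, hUmem v hv.2⟩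
  have hS3N : ∀ v ∈ S3, v + sig q v + sig q (sig q v) = 0 := by
    intro v hv
    have h1 : v ∈ LinearMap.ker N := hWker ▸ (Submodule.mem_inf.mp hv).1
    have h2 := LinearMap.mem_ker.mp h1
    rwa [hNapp] at h2
  have hpair : ∀ v, v ∈ S3 → v ≠ 0 → LinearIndependent F ![v, sig q v] := by
    intro v hv hv0
    rw [LinearIndependent.pair_iff]
    intro s t hst
    by_cases ht : t = 0
    · subst ht
      rw [zero_smul, add_zero] at hst
      exact ⟨(smul_eq_zero.mp hst).resolve_right hv0, rfl⟩
    · exfalso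
      set a : F := -(t⁻¹ * s) with ha
      have h1 : t • sig q v = -(s • v) := eq_neg_of_add_eq_zero_right hst
      have hsig : sig q v = a • v := by
        calc sig q v = t⁻¹ • (t • sig q v) := (inv_smul_smul₀ ht _).symm
          _ = t⁻¹ • (-(s • v)) := by rw [h1]
          _ = a • v := by rw [ha, smul_neg, smul_smul, neg_smul]
      have hsig2 : sig q (sig q v) = (a * a) • v := by
        rw [hsig, show sig q (a • v) = σ (a • v) from rfl, map_smul, sigL_apply, hsig, smul_smul]
      have hN := hS3N v hv
      rw [hsig2, hsig] at hN
      have hcomb : (1 + a + a ^ 2) • v = 0 := by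
        rw [← hN]; module
      exact quad_no_root hF hq hq3 a ((smul_eq_zero.mp hcomb).resolve_right hv0)
  have hrank2 : ∀ v, v ∈ S3 → v ≠ 0 → finrank F (Submodule.span F {v, sig q v}) = 2 := by
    intro v hv hv0
    have h := finrank_span_eq_card (hpair v hv hv0)
    rw [show Set.range ![v, sig q v] = {v, sig q v} by
      simp only [Matrix.range_cons, Matrix.range_empty, Set.union_empty, Set.union_singleton]
      exact Set.pair_comm _ _] at h
    rw [h]
    simp
  have hfixline : ∀ v, v ∈ S3 → v ≠ 0 → FixedLine q (Submodule.span F {v, sig q v}) := by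
    intro v hv hv0
    have hNv := hS3N v hv
    have hσ2 : sig q (sig q v) = -(v + sig q v) := eq_neg_of_add_eq_zero_right hNv
    have hvmem : v = -(sig q v + sig q (sig q v)) := by
      rw [hσ2]; abel
    constructor
    · exact hrank2 v hv hv0
    · have hmap : Submodule.map σ (Submodule.span F {v, sig q v})
          = Submodule.span F {v, sig q v} := by
        rw [Submodule.map_span, show σ '' {v, sig q v} = {sig q v, sig q (sig q v)} from
          Set.image_pair (sig q) v (sig q v)]
        apply le_antisymm
        · rw [Submodule.span_le]
          intro x hx
          simp only [Set.mem_insert_iff, Set.mem_singleton_iff] at hx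
          rcases hx with rfl | rfl
          · exact Submodule.subset_span (by simp)
          · rw [hσ2]
            exact Submodule.neg_mem _ (Submodule.add_mem _
              (Submodule.subset_span (by simp)) (Submodule.subset_span (by simp)))
        · rw [Submodule.span_le]
          intro x hx
          simp only [Set.mem_insert_iff, Set.mem_singleton_iff] at hx
          have hv' : v ∈ Submodule.span F {sig q v, sig q (sig q v)} := by
            have hm : -(sig q v + sig q (sig q v))
                ∈ Submodule.span F {sig q v, sig q (sig q v)} :=
              Submodule.neg_mem _ (Submodule.add_mem _
                (Submodule.subset_span (by simp)) (Submodule.subset_span (by simp)))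
            rwa [← hvmem] at hm
          rcases hx with rfl | rfl
          · exact hv'
          · exact Submodule.subset_span (by simp)
      have hcoe : sig q '' (Submodule.span F {v, sig q v} : Set (VK K))
          = (Submodule.map σ (Submodule.span F {v, sig q v}) : Set (VK K)) :=
        (Submodule.map_coe σ _).symm
      rw [hcoe, hmap]
  have hlineS3 : ∀ v, v ∈ S3 → v ≠ 0 → Submodule.span F {v, sig q v} ≤ S3 := by
    intro v hv hv0
    rw [Submodule.span_le]
    intro x hx
    simp only [Set.mem_insert_iff, Set.mem_singleton_iff] at hx
    rcases hx with rfl | rfl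
    · exact hv
    · exact hS3mem v hv
  have huniq : ∀ L, FixedLine q L → L ≤ S3 → ∀ v, v ∈ L → v ≠ 0 →
      L = Submodule.span F {v, sig q v} := by
    intro L hL hLS v hvL hv0
    have hσv : sig q v ∈ L := by
      have : sig q v ∈ sig q '' (L : Set (VK K)) := Set.mem_image_of_mem _ hvL
      rwa [hL.2] at this
    have hle : Submodule.span F {v, sig q v} ≤ L := by
      rw [Submodule.span_le]
      intro x hx
      simp only [Set.mem_insert_iff, Set.mem_singleton_iff] at hx
      rcases hx with rfl | rfl
      · exact hvL
      · exact hσv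
    exact (Submodule.eq_of_le_of_finrank_eq hle
      (by rw [hrank2 v (hLS hvL) hv0, hL.1])).symm
  haveI : Fintype (↥U) := Fintype.ofFinite _
  haveI : Fintype (↥(Submodule.restrictScalars F U)) := Fintype.ofFinite _
  have hU6 : finrank F (Submodule.restrictScalars F U) = 6 := by
    have hcU : Fintype.card U = (q ^ 3) ^ 2 := by
      have h := card_eq_pow_finrank (K := K) (V := U)
      rw [hK, hU.1] at h
      exact h
    have hcU' : Fintype.card (Submodule.restrictScalars F U)
        = q ^ finrank F (Submodule.restrictScalars F U) := by
      have h := card_eq_pow_finrank (K := F) (V := Submodule.restrictScalars F U)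
      rw [hF] at h
      exact h
    have hcc : Fintype.card (Submodule.restrictScalars F U) = Fintype.card U :=
      Fintype.card_congr (Equiv.subtypeEquivRight (fun x => Iff.rfl))
    have h6 : q ^ 6 = q ^ finrank F (Submodule.restrictScalars F U) := by
      rw [← hcU', hcc, hcU]; ring
    exact (Nat.pow_right_injective (by omega) h6).symm
  have hsum := Submodule.finrank_sup_add_finrank_inf_eq W (Submodule.restrictScalars F U)
  rw [← hS3def, hW6, hU6] at hsum
  have hsup_le := Submodule.finrank_le (W ⊔ Submodule.restrictScalars F U)
  rw [hV9] at hsup_le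
  have hdim_ge : 3 ≤ finrank F S3 := by omega
  have hdim_le : finrank F S3 ≤ 6 := by
    calc finrank F S3 ≤ finrank F (Submodule.restrictScalars F U) :=
          Submodule.finrank_mono inf_le_right
      _ = 6 := hU6
  have hdim_ne6 : finrank F S3 ≠ 6 := by
    intro h6
    have hSU : S3 = Submodule.restrictScalars F U :=
      Submodule.eq_of_le_of_finrank_eq inf_le_right (by rw [h6, hU6])
    have hUW : Submodule.restrictScalars F U ≤ W := by
      rw [← hSU]; exact inf_le_left
    obtain ⟨v, hvU, hv0⟩ : ∃ v ∈ U, v ≠ 0 := by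
      by_contra hcon
      push_neg at hcon
      have hbot : U = ⊥ := (Submodule.eq_bot_iff U).mpr hcon
      have h2 := hU.1
      rw [hbot, finrank_bot] at h2
      omega
    have hall : ∀ lam : K, (lam • v) + lam ^ q • sig q v
        + (lam ^ q) ^ q • sig q (sig q v) = 0 := by
      intro lam
      have hmemU : lam • v ∈ U := Submodule.smul_mem U lam hvU
      have hmem : lam • v ∈ W := hUW hmemU
      rw [hWker] at hmem
      have h := LinearMap.mem_ker.mp hmem
      rw [hNapp, sig_Ksmul, sig_Ksmul] at h
      exact h
    have hcomp : ∀ j : VK K → K, (∀ w u : VK K, j (w + u) = j w + j u) →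
        (∀ (lam : K) (w : VK K), j (lam • w) = lam * j w) → j 0 = 0 → j v = 0 := by
      intro j hadd hsmul hzero
      have hx : ∀ lam : K, j v * lam + j (sig q v) * lam ^ q
          + j (sig q (sig q v)) * lam ^ (q * q) = 0 := by
        intro lam
        have h := congrArg j (hall lam)
        rw [hadd, hadd, hsmul, hsmul, hsmul, hzero] at h
        rw [pow_mul]
        linear_combination h
      exact (char_indep hq hK _ _ _ hx).1
    have h1 : v.1 = 0 := hcomp (fun w => w.1) (fun _ _ => rfl) (fun _ _ => rfl) rfl
    have h2 : v.2.1 = 0 := hcomp (fun w => w.2.1) (fun _ _ => rfl) (fun _ _ => rfl) rfl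
    have h3' : v.2.2 = 0 := hcomp (fun w => w.2.2) (fun _ _ => rfl) (fun _ _ => rfl) rfl
    exact hv0 (Prod.ext h1 (Prod.ext h2 h3'))
  -- counting
  haveI : Finite (Submodule F (VK K)) :=
    Finite.of_injective (fun (p : Submodule F (VK K)) => (p : Set (VK K)))
      SetLike.coe_injective
  set T := {L : Submodule F (VK K) // FixedLine q L ∧ L ≤ S3} with hTdef
  haveI : Fintype T := Fintype.ofFinite T
  set S := {x : VK K // x ∈ S3 ∧ x ≠ 0} with hSdef
  haveI : Fintype S := Fintype.ofFinite S
  haveI : Fintype (↥S3) := Fintype.ofFinite _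
  set f : S → T := fun x => ⟨Submodule.span F {x.1, sig q x.1},
    hfixline x.1 x.2.1 x.2.2, hlineS3 x.1 x.2.1 x.2.2⟩ with hfdef
  set d := finrank F S3 with hd
  have hcS3 : Fintype.card (↥S3) = q ^ d := by
    have h := card_eq_pow_finrank (K := F) (V := ↥S3)
    rw [hF] at h
    exact h
  have hcS : Fintype.card S + 1 = q ^ d := by
    have e : S ≃ {y : ↥S3 // ¬ (y = 0)} :=
      { toFun := fun x => ⟨⟨x.1, x.2.1⟩, fun h => x.2.2 (congrArg Subtype.val h)⟩
        invFun := fun y => ⟨y.1.1, y.1.2, fun h => y.2 (Subtype.ext h)⟩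
        left_inv := fun x => rfl
        right_inv := fun y => rfl }
    rw [Fintype.card_congr e, Fintype.card_subtype_compl, Fintype.card_subtype_eq (0 : ↥S3),
      hcS3]
    have : 1 ≤ q ^ d := Nat.one_le_pow _ _ (by omega)
    omega
  have hfiber : ∀ L : T, Fintype.card {x : S // f x = L} = q ^ 2 - 1 := by
    intro L
    haveI : Fintype (↥L.1) := Fintype.ofFinite _
    have hcL : Fintype.card (↥L.1) = q ^ 2 := by
      have h := card_eq_pow_finrank (K := F) (V := ↥L.1)
      rw [hF, L.2.1.1] at h
      exact h
    have e : {x : S // f x = L} ≃ {y : ↥L.1 // ¬ (y = 0)} :=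
      { toFun := fun x => ⟨⟨x.1.1, by
          have hval : Submodule.span F {x.1.1, sig q x.1.1} = L.1 :=
            congrArg Subtype.val x.2
          rw [← hval]
          exact Submodule.subset_span (by simp)⟩,
          fun h => x.1.2.2 (congrArg Subtype.val h)⟩
        invFun := fun y => ⟨⟨y.1.1, L.2.2 y.1.2, fun h => y.2 (Subtype.ext h)⟩, by
          apply Subtype.ext
          exact (huniq L.1 L.2.1 L.2.2 y.1.1 y.1.2 (fun h => y.2 (Subtype.ext h))).symm⟩
        left_inv := fun x => rfl
        right_inv := fun y => rfl }
    rw [Fintype.card_congr e, Fintype.card_subtype_compl, Fintype.card_subtype_eq (0 : ↥L.1),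
      hcL]
  have hcount : Fintype.card S = Fintype.card T * (q ^ 2 - 1) := by
    have h := Fintype.card_congr (Equiv.sigmaFiberEquiv f).symm
    rw [Fintype.card_sigma] at h
    rw [h]
    rw [Finset.sum_congr rfl (fun L _ => hfiber L), Finset.sum_const, Finset.card_univ,
      smul_eq_mul]
  have hq2pos : 1 ≤ q ^ 2 := Nat.one_le_pow _ _ (by omega)
  have hZ : (q : ℤ) ^ d - 1 = (Fintype.card T : ℤ) * ((q : ℤ) ^ 2 - 1) := by
    have h1 : q ^ d = Fintype.card T * (q ^ 2 - 1) + 1 := by omega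
    have h2 := congrArg (Nat.cast : ℕ → ℤ) h1
    push_cast [Nat.cast_sub hq2pos] at h2
    linarith
  have hqZ : (3 : ℤ) ≤ (q : ℤ) := by exact_mod_cast (by omega : 3 ≤ q)
  have hd4 : d = 4 := by
    have hcases : d = 3 ∨ d = 4 ∨ d = 5 := by omega
    rcases hcases with h | h | h
    · exfalso
      rw [h] at hZ
      have hdvd : ((q : ℤ) ^ 2 - 1) ∣ ((q : ℤ) - 1) := by
        have heq : ((q : ℤ) - 1) = ((q : ℤ) ^ 3 - 1) - (q : ℤ) * ((q : ℤ) ^ 2 - 1) := by ring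
        rw [heq, hZ]
        exact dvd_sub (Dvd.intro_left _ rfl) (Dvd.intro_left _ rfl)
      have hle := Int.le_of_dvd (by linarith) hdvd
      nlinarith
    · exact h
    · exfalso
      rw [h] at hZ
      have hdvd : ((q : ℤ) ^ 2 - 1) ∣ ((q : ℤ) - 1) := by
        have heq : ((q : ℤ) - 1) = ((q : ℤ) ^ 5 - 1)
            - ((q : ℤ) ^ 3 + (q : ℤ)) * ((q : ℤ) ^ 2 - 1) := by ring
        rw [heq, hZ]
        exact dvd_sub (Dvd.intro_left _ rfl) (Dvd.intro_left _ rfl)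
      have hle := Int.le_of_dvd (by linarith) hdvd
      nlinarith
  have ht : Fintype.card T = q ^ 2 + 1 := by
    rw [hd4] at hZ
    have hne : ((q : ℤ) ^ 2 - 1) ≠ 0 := by nlinarith
    have hZ2 : ((q : ℤ) ^ 2 + 1) * ((q : ℤ) ^ 2 - 1) = (Fintype.card T : ℤ)
        * ((q : ℤ) ^ 2 - 1) := by linarith [hZ]
    have := mul_right_cancel₀ hne hZ2
    exact_mod_cast this.symm
  refine ⟨hd4, ?_, ?_, ?_⟩
  · rw [Nat.card_eq_fintype_card]
    exact ht
  · intro L M hL hLle hM hMle hne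
    rw [Submodule.eq_bot_iff]
    intro x hx
    by_contra hx0
    have hxL : x ∈ L := (Submodule.mem_inf.mp hx).1
    have hxM : x ∈ M := (Submodule.mem_inf.mp hx).2
    have e1 := huniq L hL hLle x hxL hx0
    have e2 := huniq M hM hMle x hxM hx0
    exact hne (e1.trans e2.symm)
  · intro w hw hw0
    exact ⟨Submodule.span F {w, sig q w}, hfixline w hw hw0, hlineS3 w hw hw0,
      Submodule.subset_span (by simp)⟩
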